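/- arXiv:2001.10265 — 2 statements merged into one kernel-verified Lean document; each statement's English description precedes it below -/
import Mathlib

section
/- If n is odd and n ≡ 1 (mod 4), then U_n - 1 = U_{(n-1)/2} · V_{(n+1)/2}; if n ≡ 3 (mod 4), then U_n - 1 = U_{(n+1)/2} · V_{(n-1)/2}. -/
/-!
Write `n = 2k + 1` (or `2k + 3`) with `k` even. The addition formula gives
`U (2k+1) = U (k+1)^2 + U k^2`, Cassini's identity for even `k` gives `U (k+1)^2 = U (k+2) U k + 1`,
and `V (k+1) = U (k+2) + U k`; combining them, `U (2k+1) - 1 = U k V (k+1)` and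
`U (2k+3) - 1 = U (k+2) V (k+1)`.
-/

def U (r : ℕ) : ℕ → ℕ
  | 0 => 0
  | 1 => 1
  | n + 2 => r * U r (n + 1) + U r n

def V (r : ℕ) : ℕ → ℕ
  | 0 => 2
  | 1 => r
  | n + 2 => r * V r (n + 1) + V r n

theorem U_add_two (r n : ℕ) : U r (n + 2) = r * U r (n + 1) + U r n := rfl

theorem V_add_two (r n : ℕ) : V r (n + 2) = r * V r (n + 1) + V r n := rfl

theorem U_add_add_one (r m n : ℕ) :
    U r (m + n + 1) = U r (m + 1) * U r (n + 1) + U r m * U r n := by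
  induction n using Nat.twoStepInduction with
  | zero => simp [U]
  | one => simp [U]; ring
  | more n ih₀ ih₁ =>
    rw [show m + (n + 2) + 1 = m + n + 1 + 2 by ring, U_add_two, ih₀,
      show m + n + 1 + 1 = m + (n + 1) + 1 by ring, ih₁, U_add_two r (n + 1), U_add_two r n]
    ring

theorem U_two_mul_add_one (r n : ℕ) : U r (2 * n + 1) = U r (n + 1) ^ 2 + U r n ^ 2 := by
  rw [two_mul, U_add_add_one]; ring

theorem V_add_one (r n : ℕ) : V r (n + 1) = U r (n + 2) + U r n := by
  induction n using Nat.twoStepInduction with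
  | zero => simp [U, V]
  | one => simp [U, V]
  | more n ih₀ ih₁ =>
    rw [V_add_two, ih₀, ih₁, U_add_two r (n + 2), U_add_two r (n + 1), U_add_two r n]
    ring

theorem U_sq_sub_mul (r n : ℕ) :
    (U r (n + 1) : ℤ) ^ 2 - U r (n + 2) * U r n = (-1) ^ n := by
  induction n with
  | zero => simp [U]
  | succ n ih =>
    have h₀ : (U r (n + 2) : ℤ) = r * U r (n + 1) + U r n := mod_cast U_add_two r n
    have h₁ : (U r (n + 3) : ℤ) = r * U r (n + 2) + U r (n + 1) := mod_cast U_add_two r (n + 1)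
    rw [pow_succ]
    linear_combination (-(U r (n + 1) : ℤ)) * h₁ + (U r (n + 2) : ℤ) * h₀ - ih

theorem U_sq_of_even (r : ℕ) {n : ℕ} (hn : Even n) : U r (n + 1) ^ 2 = U r (n + 2) * U r n + 1 := by
  have h := U_sq_sub_mul r n
  rw [hn.neg_one_pow] at h
  zify
  linarith

theorem U_two_mul_add_one_of_even (r : ℕ) {k : ℕ} (hk : Even k) :
    U r (2 * k + 1) = U r k * V r (k + 1) + 1 := by
  rw [U_two_mul_add_one, U_sq_of_even r hk, V_add_one]; ring

theorem U_two_mul_add_three_of_even (r : ℕ) {k : ℕ} (hk : Even k) :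
    U r (2 * k + 3) = U r (k + 2) * V r (k + 1) + 1 := by
  rw [show 2 * k + 3 = 2 * (k + 1) + 1 by ring, U_two_mul_add_one, U_sq_of_even r hk, V_add_one]
  ring

theorem stmt_9_general (r : ℕ) (n : ℕ) :
    (n % 4 = 1 → (U r n : ℤ) - 1 = (U r ((n - 1) / 2) : ℤ) * (V r ((n + 1) / 2) : ℤ)) ∧
      (n % 4 = 3 → (U r n : ℤ) - 1 = (U r ((n + 1) / 2) : ℤ) * (V r ((n - 1) / 2) : ℤ)) := by
  constructor
  · intro hn
    obtain ⟨t, rfl⟩ : ∃ t, n = 2 * (2 * t) + 1 := ⟨n / 4, by omega⟩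
    rw [U_two_mul_add_one_of_even r (even_two_mul t), show (2 * (2 * t) + 1 - 1) / 2 = 2 * t by omega,
      show (2 * (2 * t) + 1 + 1) / 2 = 2 * t + 1 by omega]
    push_cast; ring
  · intro hn
    obtain ⟨t, rfl⟩ : ∃ t, n = 2 * (2 * t) + 3 := ⟨n / 4, by omega⟩
    rw [U_two_mul_add_three_of_even r (even_two_mul t),
      show (2 * (2 * t) + 3 + 1) / 2 = 2 * t + 2 by omega,
      show (2 * (2 * t) + 3 - 1) / 2 = 2 * t + 1 by omega]
    push_cast; ring

theorem stmt_9 (r : ℕ) (hr : 1 ≤ r) (n : ℕ) (hodd : Odd n) :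
    (n % 4 = 1 → (U r n : ℤ) - 1 = (U r ((n - 1) / 2) : ℤ) * (V r ((n + 1) / 2) : ℤ)) ∧
      (n % 4 = 3 → (U r n : ℤ) - 1 = (U r ((n + 1) / 2) : ℤ) * (V r ((n - 1) / 2) : ℤ)) :=
  stmt_9_general r n
end

section
/- For any real r ≥ 3, |log α - log r - 1/r²| < 3.64/r⁴, where α = (r + √(r²+4))/2. -/
/-!
With `A = α / r` and `x = 1 / r ^ 2`, the quadratic `α ^ 2 = r α + 1` becomes `A (A - 1) = x`.
Then `1 - 1 / A ≤ log A ≤ A - 1` traps `log A` between `x / A ^ 2 ≥ x - 2 x ^ 2` and `x`,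
so `|log A - x| ≤ 2 x ^ 2`, well below `3.64 x ^ 2`.
-/

open Real

noncomputable def metallicMean (r : ℝ) : ℝ := (r + √(r ^ 2 + 4)) / 2

lemma metallicMean_sq (r : ℝ) : metallicMean r ^ 2 = r * metallicMean r + 1 := by
  have hs : √(r ^ 2 + 4) ^ 2 = r ^ 2 + 4 := sq_sqrt (by positivity)
  unfold metallicMean
  linear_combination hs / 4

lemma metallicMean_pos (r : ℝ) : 0 < metallicMean r := by
  have hs : |r| < √(r ^ 2 + 4) := by
    rw [← sqrt_sq_eq_abs]
    exact sqrt_lt_sqrt (sq_nonneg r) (by linarith)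
  unfold metallicMean
  linarith [neg_abs_le r]

lemma abs_log_sub_le_of_mul_sub_one_eq {A x : ℝ} (hA : 0 < A) (hx : 0 ≤ x)
    (h : A * (A - 1) = x) : |log A - x| ≤ 2 * x ^ 2 := by
  have hA1 : 1 ≤ A := by nlinarith
  have hupper : log A ≤ x := by nlinarith [log_le_sub_one_of_pos hA]
  have hlower : x - 2 * x ^ 2 ≤ log A := by
    have hinv : 1 - A⁻¹ = x / A ^ 2 := by field_simp; linear_combination h
    have hx_div : x - 2 * x ^ 2 ≤ x / A ^ 2 := by
      rw [le_div_iff₀ (by positivity)]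
      nlinarith [mul_nonneg hx (sub_nonneg.2 hA1)]
    linarith [one_sub_inv_le_log_of_pos hA]
  exact abs_le.2 ⟨by linarith, by linarith [sq_nonneg x]⟩

theorem stmt_18 (r : ℝ) (hr : 3 ≤ r) :
    |Real.log ((r + Real.sqrt (r ^ 2 + 4)) / 2) - Real.log r - 1 / r ^ 2| < 3.64 / r ^ 4 := by
  have hr0 : 0 < r := by linarith
  change |log (metallicMean r) - log r - 1 / r ^ 2| < 3.64 / r ^ 4
  have hquad : metallicMean r / r * (metallicMean r / r - 1) = 1 / r ^ 2 := by
    field_simp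
    linear_combination metallicMean_sq r
  have hbound := abs_log_sub_le_of_mul_sub_one_eq (div_pos (metallicMean_pos r) hr0)
    (by positivity) hquad
  rw [log_div (metallicMean_pos r).ne' hr0.ne'] at hbound
  calc _ ≤ 2 * (1 / r ^ 2) ^ 2 := hbound
    _ < 3.64 / r ^ 4 := by
      rw [div_pow, one_pow, ← pow_mul, mul_one_div]
      exact div_lt_div_of_pos_right (by norm_num) (by positivity)
end
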